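/- Let N be a Nijenhuis operator on a compatible Hom-Lie algebra (g,[·,·]_1,[·,·]_2,α), and define ω_i(x,y) := [Nx,y]_i + [x,Ny]_i − N[x,y]_i for i = 1,2. Then for every scalar t, the quadruple (g, [·,·]_1 + tω_1, [·,·]_2 + tω_2, α) is a compatible Hom-Lie algebra, and id + tN is a morphism of compatible Hom-Lie algebras from (g, [·,·]_1 + tω_1, [·,·]_2 + tω_2, α) to (g, [·,·]_1, [·,·]_2, α) (so the linear deformation generated by (ω_1,ω_2) is trivial). -/

import Mathlib

/-!
Write `ω` for `nijenhuisBracket b N`. The Hom-Jacobiator of `b + t ω` is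
`J(b, b) + t (J(b, ω) + J(ω, b)) + t² J(ω, ω)`. The middle coefficient is a combination of the
Hom-Jacobi identities of `b` at `(Nx, y, z)`, `(x, Ny, z)`, `(x, y, Nz)` and the image under `N`
of the one at `(x, y, z)` (this is where `α N = N α` enters); `J(ω, ω)` vanishes because the
Nijenhuis condition reads `N ω(x, y) = [Nx, Ny]`. Everything is linear in the bracket, so the
same applies to `l b₁ + m b₂`. Finally `(id + tN)` intertwines the brackets because
`(id + tN) [x, y]_t - [x + tNx, y + tNy] = t² (N ω(x, y) - [Nx, Ny])`.
-/

def IsBilin (K : Type*) {M N P : Type*} [Field K] [AddCommGroup M] [Module K M]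
    [AddCommGroup N] [Module K N] [AddCommGroup P] [Module K P]
    (b : M → N → P) : Prop :=
  (∀ x, IsLinearMap K (b x)) ∧ (∀ y, IsLinearMap K fun x => b x y)

def IsHomLie (K : Type*) {g : Type*} [Field K] [AddCommGroup g] [Module K g]
    (b : g → g → g) (α : g → g) : Prop :=
  IsBilin K b ∧ IsLinearMap K α ∧
  (∀ x y, b x y = - b y x) ∧
  (∀ x y, α (b x y) = b (α x) (α y)) ∧
  (∀ x y z, b (b x y) (α z) + b (b y z) (α x) + b (b z x) (α y) = 0)

/-- A compatible Hom-Lie algebra: both brackets and every linear combination of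
them are Hom-Lie brackets with the same twisting map `α`. -/
def IsCompatHomLie (K : Type*) {g : Type*} [Field K] [AddCommGroup g] [Module K g]
    (b₁ b₂ : g → g → g) (α : g → g) : Prop :=
  IsHomLie K b₁ α ∧ IsHomLie K b₂ α ∧
  ∀ l m : K, IsHomLie K (fun x y => l • b₁ x y + m • b₂ x y) α

namespace IsBilin

variable {K M N P : Type*} [Field K] [AddCommGroup M] [Module K M]
  [AddCommGroup N] [Module K N] [AddCommGroup P] [Module K P] {b : M → N → P}

theorem add_left (hb : IsBilin K b) (x x' : M) (y : N) : b (x + x') y = b x y + b x' y :=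
  (hb.2 y).map_add x x'

theorem sub_left (hb : IsBilin K b) (x x' : M) (y : N) : b (x - x') y = b x y - b x' y :=
  (hb.2 y).map_sub x x'

theorem smul_left (hb : IsBilin K b) (c : K) (x : M) (y : N) : b (c • x) y = c • b x y :=
  (hb.2 y).map_smul c x

theorem add_right (hb : IsBilin K b) (x : M) (y y' : N) : b x (y + y') = b x y + b x y' :=
  (hb.1 x).map_add y y'

theorem smul_right (hb : IsBilin K b) (c : K) (x : M) (y : N) : b x (c • y) = c • b x y :=
  (hb.1 x).map_smul c y

theorem add_smul {c : M → N → P} (hb : IsBilin K b) (hc : IsBilin K c) (t : K) :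
    IsBilin K (fun x y => b x y + t • c x y) := by
  refine ⟨fun x => ⟨fun y y' => ?_, fun s y => ?_⟩, fun y => ⟨fun x x' => ?_, fun s x => ?_⟩⟩ <;>
    simp only [hb.add_left, hb.add_right, hb.smul_left, hb.smul_right,
      hc.add_left, hc.add_right, hc.smul_left, hc.smul_right] <;> module

end IsBilin

section Nijenhuis

variable {K g : Type*} [Field K] [AddCommGroup g] [Module K g]

def nijenhuisBracket (b : g → g → g) (N : g → g) (x y : g) : g :=
  b (N x) y + b x (N y) - N (b x y)

def IsNijenhuis (b : g → g → g) (N : g → g) : Prop :=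
  ∀ x y, b (N x) (N y) = N (nijenhuisBracket b N x y)

def deformedBracket (b : g → g → g) (N : g → g) (t : K) (x y : g) : g :=
  b x y + t • nijenhuisBracket b N x y

def homJacobiator (b c : g → g → g) (α : g → g) (x y z : g) : g :=
  b (c x y) (α z) + b (c y z) (α x) + b (c z x) (α y)

variable {b b₁ b₂ : g → g → g} {α N : g → g}

theorem isBilin_nijenhuisBracket (hb : IsBilin K b) (hN : IsLinearMap K N) :
    IsBilin K (nijenhuisBracket b N) := by
  refine ⟨fun x => ⟨fun y y' => ?_, fun c y => ?_⟩, fun y => ⟨fun x x' => ?_, fun c x => ?_⟩⟩ <;>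
    simp only [nijenhuisBracket, hb.add_left, hb.add_right, hb.smul_left, hb.smul_right,
      hN.map_add, hN.map_smul] <;> module

theorem homJacobiator_add_smul {c : g → g → g} (hb : IsBilin K b) (hc : IsBilin K c) (t : K)
    (x y z : g) :
    homJacobiator (fun x y => b x y + t • c x y) (fun x y => b x y + t • c x y) α x y z
      = homJacobiator b b α x y z + t • (homJacobiator b c α x y z + homJacobiator c b α x y z)
        + (t * t) • homJacobiator c c α x y z := by
  simp only [homJacobiator, hb.add_left, hb.smul_left, hc.add_left, hc.smul_left]
  module

theorem homJacobiator_nijenhuisBracket_add (hb : IsBilin K b) (hN : IsLinearMap K N)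
    (hcomm : ∀ x, α (N x) = N (α x)) (hJ : ∀ x y z, homJacobiator b b α x y z = 0) (x y z : g) :
    homJacobiator b (nijenhuisBracket b N) α x y z
      + homJacobiator (nijenhuisBracket b N) b α x y z = 0 := by
  have Jx := hJ (N x) y z
  have Jy := hJ x (N y) z
  have Jz := hJ x y (N z)
  have NJ := congrArg N (hJ x y z)
  simp only [homJacobiator, hcomm, hN.map_add, hN.map_zero] at Jx Jy Jz NJ
  simp only [homJacobiator, nijenhuisBracket, hb.add_left, hb.sub_left]
  linear_combination (norm := module) Jx + Jy + Jz - NJ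

theorem homJacobiator_nijenhuisBracket (hb : IsBilin K b) (hN : IsLinearMap K N)
    (hcomm : ∀ x, α (N x) = N (α x)) (hJ : ∀ x y z, homJacobiator b b α x y z = 0)
    (hnij : IsNijenhuis b N) (x y z : g) :
    homJacobiator (nijenhuisBracket b N) (nijenhuisBracket b N) α x y z = 0 := by
  have Jxy := hJ (N x) (N y) z
  have Jyz := hJ (N y) (N z) x
  have Jzx := hJ (N z) (N x) y
  have NJx := congrArg N (hJ (N x) y z)
  have NJy := congrArg N (hJ x (N y) z)
  have NJz := congrArg N (hJ x y (N z))
  have NNJ := congrArg (fun v => N (N v)) (hJ x y z)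
  have hinner : ∀ a c d, b (b (N a) (N c)) (α d)
      = b (N (b (N a) c)) (α d) + b (N (b a (N c))) (α d) - b (N (N (b a c))) (α d) := by
    intro a c d
    rw [hnij a c, nijenhuisBracket, hN.map_sub, hN.map_add, hb.sub_left, hb.add_left]
  have houter : ∀ a c d, b (N (b a c)) (N (α d))
      = N (b (N (b a c)) (α d)) + N (b (b a c) (N (α d))) - N (N (b (b a c) (α d))) := by
    intro a c d
    rw [hnij, nijenhuisBracket, hN.map_sub, hN.map_add]
  simp only [homJacobiator, hcomm, hN.map_add, hN.map_zero]
    at Jxy Jyz Jzx NJx NJy NJz NNJ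
  simp only [homJacobiator, nijenhuisBracket, hb.add_left, hb.sub_left, hN.map_add, hN.map_sub]
  linear_combination (norm := module) Jxy + Jyz + Jzx - NJx - NJy - NJz + NNJ
    - hinner x y z - hinner y z x - hinner z x y - houter x y z - houter y z x - houter z x y

theorem IsHomLie.deform (hb : IsHomLie K b α) (hN : IsLinearMap K N)
    (hcomm : ∀ x, α (N x) = N (α x)) (hnij : IsNijenhuis b N) (t : K) :
    IsHomLie K (deformedBracket b N t) α := by
  obtain ⟨hbil, hα, hskew, hmul, hJ⟩ := hb
  refine ⟨hbil.add_smul (isBilin_nijenhuisBracket hbil hN) t, hα, fun x y => ?_, fun x y => ?_,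
    fun x y z => ?_⟩
  · simp only [deformedBracket, nijenhuisBracket]
    rw [hskew x y, hskew (N x) y, hskew x (N y), hN.map_neg]
    module
  · simp only [deformedBracket, nijenhuisBracket, hα.map_add, hα.map_smul, hα.map_sub,
      hmul, hcomm]
  · replace hJ : ∀ x y z, homJacobiator b b α x y z = 0 := hJ
    change homJacobiator (fun x y => b x y + t • nijenhuisBracket b N x y)
      (fun x y => b x y + t • nijenhuisBracket b N x y) α x y z = 0
    rw [homJacobiator_add_smul hbil (isBilin_nijenhuisBracket hbil hN), hJ,
      homJacobiator_nijenhuisBracket_add hbil hN hcomm hJ,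
      homJacobiator_nijenhuisBracket hbil hN hcomm hJ hnij]
    simp

theorem nijenhuisBracket_linearCombination (hN : IsLinearMap K N) (l m : K) (x y : g) :
    nijenhuisBracket (fun x y => l • b₁ x y + m • b₂ x y) N x y
      = l • nijenhuisBracket b₁ N x y + m • nijenhuisBracket b₂ N x y := by
  simp only [nijenhuisBracket, hN.map_add, hN.map_smul]
  module

theorem IsNijenhuis.linearCombination (hN : IsLinearMap K N) (h₁ : IsNijenhuis b₁ N)
    (h₂ : IsNijenhuis b₂ N) (l m : K) :
    IsNijenhuis (fun x y => l • b₁ x y + m • b₂ x y) N := by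
  intro x y
  rw [nijenhuisBracket_linearCombination hN, hN.map_add, hN.map_smul, hN.map_smul, ← h₁, ← h₂]

theorem IsCompatHomLie.deform (h : IsCompatHomLie K b₁ b₂ α) (hN : IsLinearMap K N)
    (hcomm : ∀ x, α (N x) = N (α x)) (h₁ : IsNijenhuis b₁ N) (h₂ : IsNijenhuis b₂ N) (t : K) :
    IsCompatHomLie K (deformedBracket b₁ N t) (deformedBracket b₂ N t) α := by
  obtain ⟨hb₁, hb₂, hlin⟩ := h
  refine ⟨hb₁.deform hN hcomm h₁ t, hb₂.deform hN hcomm h₂ t, fun l m => ?_⟩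
  have hdeform : (fun x y => l • deformedBracket b₁ N t x y + m • deformedBracket b₂ N t x y)
      = deformedBracket (fun x y => l • b₁ x y + m • b₂ x y) N t := by
    funext x y
    simp only [deformedBracket, nijenhuisBracket_linearCombination hN]
    module
  rw [hdeform]
  exact (hlin l m).deform hN hcomm (h₁.linearCombination hN h₂ l m) t

theorem add_smul_map_deformedBracket (hb : IsBilin K b) (hN : IsLinearMap K N)
    (hnij : IsNijenhuis b N) (t : K) (x y : g) :
    deformedBracket b N t x y + t • N (deformedBracket b N t x y)
      = b (x + t • N x) (y + t • N y) := by
  have e := hnij x y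
  simp only [nijenhuisBracket, hN.map_add, hN.map_sub] at e
  simp only [deformedBracket, nijenhuisBracket, hb.add_left, hb.smul_left, hb.add_right,
    hb.smul_right, hN.map_add, hN.map_sub, hN.map_smul]
  linear_combination (norm := module) (-(t * t)) • e

end Nijenhuis

/-- A Nijenhuis operator `N` on a compatible Hom-Lie algebra generates a trivial
linear deformation: for each `t`, the deformed brackets `bᵢ + t ωᵢ` (with
`ωᵢ(x,y) = [Nx,y]ᵢ + [x,Ny]ᵢ − N[x,y]ᵢ`) form a compatible Hom-Lie algebra, and
`id + tN` is a morphism of compatible Hom-Lie algebras from the deformed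
structure to the original one. -/
theorem stmt18 {K g : Type*} [Field K] [AddCommGroup g] [Module K g]
    (b₁ b₂ : g → g → g) (α : g → g) (N : g → g)
    (h : IsCompatHomLie K b₁ b₂ α) (hN : IsLinearMap K N)
    (hcomm : ∀ x, α (N x) = N (α x))
    (hnij₁ : ∀ x y, b₁ (N x) (N y) = N (b₁ (N x) y + b₁ x (N y) - N (b₁ x y)))
    (hnij₂ : ∀ x y, b₂ (N x) (N y) = N (b₂ (N x) y + b₂ x (N y) - N (b₂ x y)))
    (t : K) :
    IsCompatHomLie K
      (fun x y => b₁ x y + t • (b₁ (N x) y + b₁ x (N y) - N (b₁ x y)))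
      (fun x y => b₂ x y + t • (b₂ (N x) y + b₂ x (N y) - N (b₂ x y))) α ∧
    (∀ x, α (x + t • N x) = α x + t • N (α x)) ∧
    (∀ x y,
      (b₁ x y + t • (b₁ (N x) y + b₁ x (N y) - N (b₁ x y)))
          + t • N (b₁ x y + t • (b₁ (N x) y + b₁ x (N y) - N (b₁ x y)))
        = b₁ (x + t • N x) (y + t • N y)) ∧
    (∀ x y,
      (b₂ x y + t • (b₂ (N x) y + b₂ x (N y) - N (b₂ x y)))
          + t • N (b₂ x y + t • (b₂ (N x) y + b₂ x (N y) - N (b₂ x y)))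
        = b₂ (x + t • N x) (y + t • N y)) := by
  have hα : IsLinearMap K α := h.1.2.1
  refine ⟨h.deform hN hcomm hnij₁ hnij₂ t, fun x => ?_,
    add_smul_map_deformedBracket h.1.1 hN hnij₁ t, add_smul_map_deformedBracket h.2.1.1 hN hnij₂ t⟩
  rw [hα.map_add, hα.map_smul, hcomm]
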